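/- The 2-dimensional rook walk numbers satisfy the constant-coefficient recurrence a(n,m) = 2·a(n−1,m) + 2·a(n,m−1) − 3·a(n−1,m−1) for all n ≥ 2 and m ≥ 2. -/

import Mathlib

/-- The set of `d`-dimensional rook walks from the origin to `v`: a walk is a
finite sequence of steps, each step adding a positive integer amount to
exactly one coordinate (a step is recorded as a pair of the chosen coordinate
and the positive amount added). -/
def RookWalks (d : ℕ) (v : Fin d → ℕ) : Set (List (Fin d × ℕ)) :=
  {L | (∀ s ∈ L, 0 < s.2) ∧
       ∀ i : Fin d, (L.map (fun s => if s.1 = i then s.2 else 0)).sum = v i}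

/-- The number of `d`-dimensional rook walks from the origin to `v`. -/
noncomputable def rookWalkCount (d : ℕ) (v : Fin d → ℕ) : ℕ :=
  (RookWalks d v).ncard

/-!
Splitting off the last step of a walk to `v ≠ 0`, a step that raises some coordinate `i` from
`k < v i` to `v i`, gives `a(v) = ∑ᵢ ∑_{k < v i} a(update v i k)`. In dimension two this reads
`a(n,m) = ∑_{k<n} a(k,m) + ∑_{k<m} a(n,k)`, and comparing it at `(n+1,m+1)`, `(n,m+1)`,
`(n+1,m)` and `(n,m)` makes the partial sums cancel.
-/

open Function Finset

section RookWalks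

variable {d : ℕ}

theorem le_of_mem_rookWalks {v : Fin d → ℕ} {L : List (Fin d × ℕ)} (hL : L ∈ RookWalks d v)
    {s : Fin d × ℕ} (hs : s ∈ L) : s.2 ≤ v s.1 := by
  rw [← hL.2 s.1]
  simpa using
    List.le_sum_of_mem (List.mem_map_of_mem (f := fun t => if t.1 = s.1 then t.2 else 0) hs)

theorem rookWalks_zero : RookWalks d 0 = {[]} := by
  ext L
  refine ⟨fun hL => List.eq_nil_iff_forall_not_mem.2 fun s hs => ?_, ?_⟩
  · exact (hL.1 s hs).ne' (Nat.le_zero.1 (le_of_mem_rookWalks hL hs))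
  · rintro rfl
    simp [RookWalks]

theorem append_singleton_mem_rookWalks_iff {v : Fin d → ℕ} {i : Fin d} {k : ℕ} (hk : k < v i)
    (L : List (Fin d × ℕ)) :
    L ++ [(i, v i - k)] ∈ RookWalks d v ↔ L ∈ RookWalks d (update v i k) := by
  simp only [RookWalks, Set.mem_ofPred_eq, List.forall_mem_append, List.forall_mem_singleton,
    List.map_append, List.sum_append, List.map_singleton, List.sum_singleton]
  refine and_congr (and_iff_left (Nat.sub_pos_of_lt hk)) (forall_congr' fun j => ?_)
  rcases eq_or_ne j i with rfl | hj
  · simp only [if_true, update_self]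
    omega
  · simp [hj, Ne.symm hj]

theorem rookWalks_eq_biUnion {v : Fin d → ℕ} (hv : v ≠ 0) :
    RookWalks d v = ⋃ p ∈ univ.sigma fun i => range (v i),
      (· ++ [(p.1, v p.1 - p.2)]) '' RookWalks d (update v p.1 p.2) := by
  ext L
  simp only [Set.mem_iUnion, Set.mem_image, mem_sigma, mem_univ, mem_range, true_and,
    exists_prop, Sigma.exists]
  constructor
  · intro hL
    obtain ⟨L', ⟨i, j⟩, rfl⟩ := L.eq_nil_or_concat'.resolve_left <| by
      rintro rfl
      exact hv (funext fun i => (hL.2 i).symm)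
    have hj : 0 < j := hL.1 (i, j) (by simp)
    have hjv : j ≤ v i := le_of_mem_rookWalks hL (s := (i, j)) (by simp)
    have hk : v i - j < v i := by omega
    rw [← Nat.sub_sub_self hjv] at hL ⊢
    exact ⟨i, v i - j, hk, L', (append_singleton_mem_rookWalks_iff hk L').1 hL, rfl⟩
  · rintro ⟨i, k, hk, L', hL', rfl⟩
    exact (append_singleton_mem_rookWalks_iff hk L').2 hL'

theorem rookWalks_finite (v : Fin d → ℕ) : (RookWalks d v).Finite := by
  induction v using WellFoundedLT.induction with
  | _ v ih =>
    rcases eq_or_ne v 0 with rfl | hv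
    · simp [rookWalks_zero]
    · rw [rookWalks_eq_biUnion hv]
      exact (finite_toSet _).biUnion fun p hp =>
        (ih _ (update_lt_self_iff.2 (mem_range.1 (mem_sigma.1 hp).2))).image _

theorem rookWalkCount_eq_sum {v : Fin d → ℕ} (hv : v ≠ 0) :
    rookWalkCount d v = ∑ i, ∑ k ∈ range (v i), rookWalkCount d (update v i k) := by
  rw [rookWalkCount, rookWalks_eq_biUnion hv, ← set_biUnion_coe, (finite_toSet _).ncard_biUnion
    (fun p _ => (rookWalks_finite _).image _), finsum_mem_coe_finset, sum_sigma]
  · exact sum_congr rfl fun i _ => sum_congr rfl fun k _ =>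
      Set.ncard_image_of_injective _ (List.append_left_injective _)
  · rintro ⟨i, k⟩ hik ⟨j, l⟩ hjl hne
    refine Set.disjoint_left.2 ?_
    rintro _ ⟨L, -, rfl⟩ ⟨L', -, hL⟩
    obtain ⟨rfl, hlk⟩ := Prod.mk.inj (List.singleton_inj.1 (List.append_inj' hL rfl).2)
    simp only [coe_sigma, Set.mem_sigma_iff, coe_range, Set.mem_Iio] at hik hjl hlk
    exact hne (by rw [show l = k by omega])

end RookWalks

theorem rookWalkCount_two_eq_sum {n m : ℕ} (h : n + m ≠ 0) :
    rookWalkCount 2 ![n, m] =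
      ∑ k ∈ range n, rookWalkCount 2 ![k, m] + ∑ k ∈ range m, rookWalkCount 2 ![n, k] := by
  have hv : ![n, m] ≠ 0 := fun hv => h <| by
    simp [show n = 0 from congrFun hv 0, show m = 0 from congrFun hv 1]
  have update_zero (k : ℕ) : update ![n, m] 0 k = ![k, m] := by
    funext j; fin_cases j <;> rfl
  have update_one (k : ℕ) : update ![n, m] 1 k = ![n, k] := by
    funext j; fin_cases j <;> rfl
  simp only [rookWalkCount_eq_sum hv, Fin.sum_univ_two, update_zero, update_one,
    Matrix.cons_val_zero, Matrix.cons_val_one, Matrix.cons_val_fin_one]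

theorem rookWalkCount_two_succ_succ {n m : ℕ} (h : n + m ≠ 0) :
    (rookWalkCount 2 ![n + 1, m + 1] : ℤ) =
      2 * rookWalkCount 2 ![n, m + 1] + 2 * rookWalkCount 2 ![n + 1, m] -
        3 * rookWalkCount 2 ![n, m] := by
  have h₁₁ := rookWalkCount_two_eq_sum (n := n + 1) (m := m + 1) (by omega)
  have h₀₁ := rookWalkCount_two_eq_sum (n := n) (m := m + 1) (by omega)
  have h₁₀ := rookWalkCount_two_eq_sum (n := n + 1) (m := m) (by omega)
  have h₀₀ := rookWalkCount_two_eq_sum h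
  rw [sum_range_succ, sum_range_succ] at h₁₁
  rw [sum_range_succ] at h₀₁ h₁₀
  linarith

/-- The 2-dimensional rook walk numbers satisfy the constant-coefficient
recurrence `a(n,m) = 2a(n−1,m) + 2a(n,m−1) − 3a(n−1,m−1)` for `n,m ≥ 2`. -/
theorem rook_two_dim_constant_recurrence (n m : ℕ) (hn : 2 ≤ n) (hm : 2 ≤ m) :
    (rookWalkCount 2 ![n, m] : ℤ)
      = 2 * (rookWalkCount 2 ![n - 1, m] : ℤ)
        + 2 * (rookWalkCount 2 ![n, m - 1] : ℤ)
        - 3 * (rookWalkCount 2 ![n - 1, m - 1] : ℤ) := by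
  obtain ⟨n, rfl⟩ : ∃ k, n = k + 1 := ⟨n - 1, by omega⟩
  obtain ⟨m, rfl⟩ : ∃ k, m = k + 1 := ⟨m - 1, by omega⟩
  simpa only [Nat.add_sub_cancel] using rookWalkCount_two_succ_succ (by omega)
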